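/- arXiv:1302.6370 — 2 statements merged into one kernel-verified Lean document; each statement's English description precedes it below -/
import Mathlib

section
/- Let (X,d) be an ultrametric space. Then the map x ↦ δ_x from X to (J_ω(X), d̂) is an isometric embedding: d̂(δ_x, δ_y) = d(x,y) for all x, y ∈ X. -/
open scoped ENNReal

noncomputable section

/-- A metric is an *ultrametric* if the strong triangle inequality holds. -/
def IsUltra (X : Type*) [MetricSpace X] : Prop :=
  ∀ x y z : X, dist x y ≤ max (dist x z) (dist z y)

/-- `mmOf x α` is the max-min functional `∨ᵢ αᵢ ∧ δ_{x i}`,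
`φ ↦ maxᵢ min (α i) (φ (x i))` (computed in the extended reals). -/
def mmOf {A : Type*} {n : ℕ} (x : Fin (n + 1) → A) (α : Fin (n + 1) → EReal) :
    (A → ℝ) → ℝ :=
  fun φ => (⨆ i, min (α i) ((φ (x i) : EReal))).toReal

/-- `μ` is a max-min measure of finite support, with support contained in `S`. -/
def IsMMOn {A : Type*} (S : Set A) (μ : (A → ℝ) → ℝ) : Prop :=
  ∃ (n : ℕ) (x : Fin (n + 1) → A) (α : Fin (n + 1) → EReal),
    (∀ i, x i ∈ S) ∧ (∃ i, α i = ⊤) ∧ μ = mmOf x α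

/-- `μ` is a max-min measure of finite support. -/
def IsMM {A : Type*} (μ : (A → ℝ) → ℝ) : Prop :=
  IsMMOn Set.univ μ

/-- `idemOf x α` is the idempotent measure `∨ᵢ αᵢ ⊙ δ_{x i}`,
`φ ↦ maxᵢ (α i + φ (x i))` (computed in the extended reals). -/
def idemOf {A : Type*} {n : ℕ} (x : Fin (n + 1) → A) (α : Fin (n + 1) → EReal) :
    (A → ℝ) → ℝ :=
  fun φ => (⨆ i, (α i + (φ (x i) : EReal))).toReal

/-- `μ` is an idempotent measure of finite support, with support contained in `S`. -/
def IsIdemOn {A : Type*} (S : Set A) (μ : (A → ℝ) → ℝ) : Prop :=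
  ∃ (n : ℕ) (x : Fin (n + 1) → A) (α : Fin (n + 1) → EReal),
    (∀ i, x i ∈ S) ∧ (∀ i, α i ≤ 0) ∧ (∃ i, α i = 0) ∧ μ = idemOf x α

/-- `μ` is an idempotent measure of finite support. -/
def IsIdem {A : Type*} (μ : (A → ℝ) → ℝ) : Prop :=
  IsIdemOn Set.univ μ

/-- The Dirac measure `δ_a`. -/
def dirac {A : Type*} (a : A) : (A → ℝ) → ℝ := fun φ => φ a

/-- `FrE e r φ`: the function `φ` is constant on every open `r`-ball of the
(extended-valued) distance `e`; this is the family `𝓕_r`. -/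
def FrE {A : Type*} (e : A → A → ℝ≥0∞) (r : ℝ≥0∞) (φ : A → ℝ) : Prop :=
  ∀ x y : A, e x y < r → φ x = φ y

/-- The ultrametric `d̂` on functionals:
`d̂(μ,ν) = inf {r > 0 ∣ μ φ = ν φ for every φ ∈ 𝓕_r}`. -/
def dHatE {A : Type*} (e : A → A → ℝ≥0∞) (μ ν : (A → ℝ) → ℝ) : ℝ≥0∞ :=
  sInf {r : ℝ≥0∞ | 0 < r ∧ ∀ φ : A → ℝ, FrE e r φ → μ φ = ν φ}

/-- The pushforward `J_ω(f)` of functionals along `f`. -/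
def Jmap {A B : Type*} (f : A → B) (μ : (A → ℝ) → ℝ) : (B → ℝ) → ℝ :=
  fun φ => μ (φ ∘ f)

/-- The extended distance of a metric space, as a two-variable function. -/
def eD (X : Type*) [PseudoEMetricSpace X] : X → X → ℝ≥0∞ :=
  fun x y => edist x y

/-- The monad multiplication (`ξ` for max-min measures, `ζ` for idempotent
measures): `mult M φ = M (μ ↦ μ φ)`. -/
def mult {A : Type*} (M : (((A → ℝ) → ℝ) → ℝ) → ℝ) : (A → ℝ) → ℝ :=
  fun φ => M fun μ => μ φ


/-!
Every function in `𝓕_r` takes the same value at `x` and `y` once `d(x,y) < r`, so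
`d̂(δ_x, δ_y) ≤ d(x,y)` in any metric space. Conversely, in an ultrametric space each point of
an open ball `B(x,r)` is its centre, so `B(x,r)` is a union of open `r`-balls and its indicator
lies in `𝓕_r`; for `0 < r ≤ d(x,y)` it separates `x` from `y`.
-/

open Metric

theorem dHatE_dirac_le {A : Type*} (e : A → A → ℝ≥0∞) (x y : A) :
    dHatE e (dirac x) (dirac y) ≤ e x y :=
  le_of_forall_gt_imp_ge_of_dense fun _ hr => sInf_le ⟨pos_of_gt hr, fun _ hφ => hφ x y hr⟩

theorem IsUltra.isUltrametricDist {X : Type*} [MetricSpace X] (hX : IsUltra X) :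
    IsUltrametricDist X :=
  ⟨fun x y z => hX x z y⟩

section Ultrametric

variable {X : Type*} [PseudoMetricSpace X] [IsUltrametricDist X]

theorem mem_ball_iff_of_dist_lt {x a b : X} {s : ℝ} (hab : dist a b < s) :
    a ∈ ball x s ↔ b ∈ ball x s := by
  constructor
  · intro ha
    rw [IsUltrametricDist.ball_eq_of_mem ha, mem_ball, dist_comm]
    exact hab
  · intro hb
    rwa [IsUltrametricDist.ball_eq_of_mem hb]

theorem frE_indicator_ball (x : X) (s : ℝ) :
    FrE (eD X) (ENNReal.ofReal s) ((ball x s).indicator 1) := by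
  intro a b hab
  rw [eD, edist_lt_ofReal] at hab
  exact Set.indicator_eq_indicator (mem_ball_iff_of_dist_lt hab) rfl

theorem exists_frE_apply_ne {x y : X} {r : ℝ≥0∞} (hr : 0 < r) (hrxy : r ≤ edist x y) :
    ∃ φ : X → ℝ, FrE (eD X) r φ ∧ φ x ≠ φ y := by
  have hr_top : r ≠ ⊤ := (hrxy.trans_lt (edist_lt_top x y)).ne
  have hx : x ∈ ball x r.toReal := mem_ball_self (ENNReal.toReal_pos hr.ne' hr_top)
  have hy : y ∉ ball x r.toReal := by
    rw [mem_ball, dist_comm, not_lt]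
    exact ENNReal.toReal_le_of_le_ofReal dist_nonneg (edist_dist x y ▸ hrxy)
  refine ⟨(ball x r.toReal).indicator 1, ?_, by simp [hx, hy]⟩
  simpa only [ENNReal.ofReal_toReal hr_top] using frE_indicator_ball x r.toReal

end Ultrametric

/-- For an ultrametric space `(X,d)`, the Dirac map
`x ↦ δ_x : X → (J_ω(X), d̂)` is an isometric embedding. -/
theorem dirac_isometric_embedding {X : Type*} [MetricSpace X] (hX : IsUltra X)
    (x y : X) :
    dHatE (eD X) (dirac x) (dirac y) = edist x y := by
  have := hX.isUltrametricDist
  refine le_antisymm (dHatE_dirac_le (eD X) x y) (le_sInf ?_)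
  rintro r ⟨hr, hdirac⟩
  by_contra! hlt
  obtain ⟨φ, hφ, hne⟩ := exists_frE_apply_ne hr hlt.le
  exact hne (hdirac φ hφ)

end
end

section
/- Suppose that for every ultrametric space X there is given a bijective isometry k_X : (I_ω(X), d̂) → (J_ω(X), d̂) such that J_ω(f) ∘ k_X = k_Y ∘ I_ω(f) for every nonexpanding map f : X → Y between ultrametric spaces. Then there exists an order-preserving bijection α : [−∞,0] → [−∞,+∞] such that for every ultrametric space X and every ∨_i t_i ⊙ δ_{x_i} ∈ I_ω(X) one has k_X(∨_i t_i ⊙ δ_{x_i}) = ∨_i α(t_i) ∧ δ_{x_i}. -/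
open scoped ENNReal

noncomputable section

/-!
A finitely supported max-min or idempotent measure is determined by its weights, the suprema of
its coefficients over the fibres of its support map, and these are read off from its values at
functions that are large at one point and small elsewhere; pushforward takes suprema of weights
over fibres. Any such measure on an ultrametric
space is the image, under a nonexpanding map, of one on a finite discrete space of large scale,
and each point of that space is split off from the others by a nonexpanding map onto two points.
By naturality, `k` is therefore determined by the images of the two-point measures
`0 ⊙ δ₀ ∨ t ⊙ δ₁`, and `α(t)` is the weight of the second point in that image. Collapsing two
of the three points of `0 ⊙ δ₀ ∨ s ⊙ δ₁ ∨ t ⊙ δ₂` in each of the three ways shows that the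
first weight is `+∞` and that `α(s ⊔ t) = α(s) ⊔ α(t)`; bijectivity of `α` comes from that of
`k` on the two-point space.
-/

namespace EReal

lemma eq_of_forall_eq_of_monotone {F : ℝ → EReal → EReal} (hmono : ∀ M, Monotone (F M))
    (hsep : ∀ c d : ℝ, c < d → ∃ M, 0 ≤ M ∧ F M c < F M d) {a b : EReal}
    (h : ∀ M : ℝ, 0 ≤ M → F M a = F M b) : a = b := by
  have key : ∀ {a b : EReal}, a < b → ∃ M, 0 ≤ M ∧ F M a < F M b := fun hab => by
    obtain ⟨c, hac, hcb⟩ := lt_iff_exists_real_btwn.mp hab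
    obtain ⟨d, hcd, hdb⟩ := lt_iff_exists_real_btwn.mp hcb
    obtain ⟨M, hM, hlt⟩ := hsep c d (mod_cast hcd)
    exact ⟨M, hM, (hmono M hac.le).trans_lt (hlt.trans_le (hmono M hdb.le))⟩
  rcases lt_trichotomy a b with hab | hab | hab
  · obtain ⟨M, hM, hlt⟩ := key hab
    exact absurd (h M hM) hlt.ne
  · exact hab
  · obtain ⟨M, hM, hlt⟩ := key hab
    exact absurd (h M hM) hlt.ne'

lemma max_min_coe_of_abs_le {c M : ℝ} (h : |c| ≤ M) :
    max (min (c : EReal) M) ((-M : ℝ) : EReal) = c := by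
  rw [min_eq_left (by exact_mod_cast (le_abs_self c).trans h),
    max_eq_left (by exact_mod_cast neg_le_of_abs_le h)]

lemma max_add_coe_of_abs_le {c M : ℝ} (h : |c| ≤ M) :
    max ((c : EReal) + M) ((-M : ℝ) : EReal) = ((c + M : ℝ) : EReal) := by
  rw [← coe_add, max_eq_left (by exact_mod_cast (by linarith [neg_le_of_abs_le h, abs_nonneg c]))]

lemma eq_of_forall_max_min_eq {a b : EReal}
    (h : ∀ M : ℝ, 0 ≤ M →
      max (min a M) ((-M : ℝ) : EReal) = max (min b M) ((-M : ℝ) : EReal)) : a = b := by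
  refine eq_of_forall_eq_of_monotone (F := fun M a => max (min a M) ((-M : ℝ) : EReal))
    (fun M _ _ hab => by dsimp only; gcongr) (fun c d hcd => ⟨|c| + |d|, by positivity, ?_⟩) h
  rw [max_min_coe_of_abs_le (le_add_of_nonneg_right (abs_nonneg d)),
    max_min_coe_of_abs_le (le_add_of_nonneg_left (abs_nonneg c))]
  exact_mod_cast hcd

lemma eq_of_forall_max_add_eq {a b : EReal}
    (h : ∀ M : ℝ, 0 ≤ M →
      max (a + M) ((-M : ℝ) : EReal) = max (b + M) ((-M : ℝ) : EReal)) : a = b := by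
  refine eq_of_forall_eq_of_monotone (F := fun M a => max (a + M) ((-M : ℝ) : EReal))
    (fun M _ _ hab => by dsimp only; gcongr) (fun c d hcd => ⟨|c| + |d|, by positivity, ?_⟩) h
  rw [max_add_coe_of_abs_le (le_add_of_nonneg_right (abs_nonneg d)),
    max_add_coe_of_abs_le (le_add_of_nonneg_left (abs_nonneg c))]
  exact_mod_cast (by linarith)

end EReal

section Coefficients

variable {A B ι : Type*} {m n : ℕ}

def fiberSup (x : ι → A) (α : ι → EReal) (p : A) : EReal :=
  ⨆ (i) (_ : x i = p), α i

lemma le_fiberSup (x : ι → A) (α : ι → EReal) (i : ι) : α i ≤ fiberSup x α (x i) :=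
  le_iSup₂ (f := fun j (_ : x j = x i) => α j) i rfl

lemma fiberSup_le {x : ι → A} {α : ι → EReal} {c : EReal} (h : ∀ i, α i ≤ c) (p : A) :
    fiberSup x α p ≤ c :=
  iSup₂_le fun i _ => h i

lemma fiberSup_apply_of_injective {x : ι → A} (hx : Function.Injective x) (α : ι → EReal)
    (i : ι) : fiberSup x α (x i) = α i :=
  le_antisymm (iSup₂_le fun _ hj => hx hj ▸ le_rfl) (le_fiberSup x α i)

lemma fiberSup_comp (f : A → B) (x : ι → A) (α : ι → EReal) (q : B) :
    fiberSup (f ∘ x) α q = ⨆ p ∈ f ⁻¹' {q}, fiberSup x α p := by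
  apply le_antisymm
  · exact iSup₂_le fun i hi => (le_fiberSup x α i).trans <|
      le_iSup₂ (f := fun p (_ : p ∈ f ⁻¹' {q}) => fiberSup x α p) (x i) hi
  · refine iSup₂_le fun p hp => iSup₂_le fun i hi => ?_
    subst hi
    exact le_iSup₂ (f := fun j (_ : f (x j) = q) => α j) i hp

lemma iSup_comp_eq_iSup_fiberSup [Finite ι] [Nonempty ι] (op : EReal → EReal → EReal)
    (hop : ∀ c, Monotone (op · c)) (hbot : ∀ c, op ⊥ c = ⊥) (x : ι → A) (α : ι → EReal)
    (φ : A → EReal) :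
    ⨆ i, op (α i) (φ (x i)) = ⨆ p, op (fiberSup x α p) (φ p) := by
  apply le_antisymm
  · exact iSup_le fun i =>
      (hop _ (le_fiberSup x α i)).trans (le_iSup (fun p => op (fiberSup x α p) (φ p)) (x i))
  · refine iSup_le fun p => ?_
    obtain ⟨i, hi⟩ := Finite.exists_max fun i => ⨆ (_ : x i = p), α i
    have hfib : fiberSup x α p = ⨆ (_ : x i = p), α i :=
      le_antisymm (iSup_le hi) (le_iSup (fun j => ⨆ (_ : x j = p), α j) i)
    by_cases h : x i = p
    · subst h
      rw [hfib, iSup_pos rfl]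
      exact le_iSup (fun j => op (α j) (φ (x j))) i
    · rw [hfib, iSup_neg h, hbot]
      exact bot_le

lemma mmOf_apply_eq_iSup_fiberSup (x : Fin (n + 1) → A) (α : Fin (n + 1) → EReal)
    (φ : A → ℝ) :
    mmOf x α φ = (⨆ p, min (fiberSup x α p) (φ p : EReal)).toReal :=
  congrArg EReal.toReal <| iSup_comp_eq_iSup_fiberSup min (fun c _ _ h => min_le_min_right c h)
    (fun _ => min_eq_left bot_le) x α fun p => (φ p : EReal)

lemma idemOf_apply_eq_iSup_fiberSup (x : Fin (n + 1) → A) (α : Fin (n + 1) → EReal)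
    (φ : A → ℝ) :
    idemOf x α φ = (⨆ p, (fiberSup x α p + φ p : EReal)).toReal :=
  congrArg EReal.toReal <| iSup_comp_eq_iSup_fiberSup (· + ·)
    (fun _ _ _ h => add_le_add h le_rfl) (fun _ => EReal.bot_add _) x α
    fun p => (φ p : EReal)

def peak [DecidableEq A] (p : A) (M : ℝ) : A → ℝ :=
  fun q => if q = p then M else -M

lemma coe_mmOf_peak [DecidableEq A] {x : Fin (n + 1) → A} {α : Fin (n + 1) → EReal}
    (hα : ∃ i, α i = ⊤) (p : A) {M : ℝ} (hM : 0 ≤ M) :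
    (mmOf x α (peak p M) : EReal) = max (min (fiberSup x α p) M) ((-M : ℝ) : EReal) := by
  have hsup : ⨆ q, min (fiberSup x α q) (peak p M q : EReal)
      = max (min (fiberSup x α p) M) ((-M : ℝ) : EReal) := by
    apply le_antisymm
    · refine iSup_le fun q => ?_
      by_cases hq : q = p
      · subst hq
        simp [peak]
      · simp [peak, hq]
    · obtain ⟨i, hi⟩ := hα
      have htop : fiberSup x α (x i) = ⊤ := top_unique (hi ▸ le_fiberSup x α i)
      refine max_le ?_ ((le_iSup _ (x i)).trans' ?_)
      · simpa [peak] using le_iSup (fun q => min (fiberSup x α q) (peak p M q : EReal)) p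
      · rw [htop, top_inf_eq]
        unfold peak
        split_ifs <;> exact_mod_cast (by linarith)
  have hfin : max (min (fiberSup x α p) M) ((-M : ℝ) : EReal) ≠ ⊤ :=
    ((max_le (min_le_right _ _) (by exact_mod_cast (by linarith))).trans_lt
      (EReal.coe_lt_top M)).ne
  rw [mmOf_apply_eq_iSup_fiberSup, hsup,
    EReal.coe_toReal hfin ((EReal.bot_lt_coe _).trans_le (le_max_right _ _)).ne']

lemma coe_idemOf_peak [DecidableEq A] {x : Fin (n + 1) → A} {α : Fin (n + 1) → EReal}
    (hle : ∀ i, α i ≤ 0) (h0 : ∃ i, α i = 0) (p : A) {M : ℝ} (hM : 0 ≤ M) :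
    (idemOf x α (peak p M) : EReal) = max (fiberSup x α p + M) ((-M : ℝ) : EReal) := by
  have hfle : fiberSup x α p ≤ 0 := fiberSup_le hle p
  have hsup : ⨆ q, (fiberSup x α q + peak p M q : EReal)
      = max (fiberSup x α p + M) ((-M : ℝ) : EReal) := by
    apply le_antisymm
    · refine iSup_le fun q => ?_
      by_cases hq : q = p
      · subst hq
        simp [peak]
      · simp only [peak, if_neg hq]
        exact le_max_of_le_right <|
          (add_le_add (fiberSup_le hle q) le_rfl).trans_eq (zero_add _)
    · obtain ⟨i, hi⟩ := h0
      have hzero : 0 ≤ fiberSup x α (x i) := hi ▸ le_fiberSup x α i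
      refine max_le ?_ ((le_iSup _ (x i)).trans' ?_)
      · simpa [peak] using le_iSup (fun q => (fiberSup x α q + peak p M q : EReal)) p
      · refine (le_add_of_nonneg_left hzero).trans' ?_
        unfold peak
        split_ifs <;> exact_mod_cast (by linarith)
  have hfin : max (fiberSup x α p + M) ((-M : ℝ) : EReal) ≠ ⊤ := by
    refine (max_le ?_ (by exact_mod_cast (by linarith))).trans_lt (EReal.coe_lt_top M) |>.ne
    exact (add_le_add hfle le_rfl).trans_eq (zero_add _)
  rw [idemOf_apply_eq_iSup_fiberSup, hsup,
    EReal.coe_toReal hfin ((EReal.bot_lt_coe _).trans_le (le_max_right _ _)).ne']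

lemma fiberSup_eq_of_mmOf_eq {x : Fin (m + 1) → A} {α : Fin (m + 1) → EReal}
    {y : Fin (n + 1) → A} {β : Fin (n + 1) → EReal} (hα : ∃ i, α i = ⊤) (hβ : ∃ i, β i = ⊤)
    (h : mmOf x α = mmOf y β) (p : A) : fiberSup x α p = fiberSup y β p := by
  classical
  refine EReal.eq_of_forall_max_min_eq fun M hM => ?_
  rw [← coe_mmOf_peak hα p hM, ← coe_mmOf_peak hβ p hM, h]

lemma fiberSup_eq_of_idemOf_eq {x : Fin (m + 1) → A} {α : Fin (m + 1) → EReal}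
    {y : Fin (n + 1) → A} {β : Fin (n + 1) → EReal} (hαle : ∀ i, α i ≤ 0)
    (hα0 : ∃ i, α i = 0) (hβle : ∀ i, β i ≤ 0) (hβ0 : ∃ i, β i = 0)
    (h : idemOf x α = idemOf y β) (p : A) : fiberSup x α p = fiberSup y β p := by
  classical
  refine EReal.eq_of_forall_max_add_eq fun M hM => ?_
  rw [← coe_idemOf_peak hαle hα0 p hM, ← coe_idemOf_peak hβle hβ0 p hM, h]

/-- The coefficient of a max-min measure at `p`. The supremum runs over all representations of
`μ`, which all give the same value by `fiberSup_eq_of_mmOf_eq`. -/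
def mmCoeff (μ : (A → ℝ) → ℝ) (p : A) : EReal :=
  ⨆ (n : ℕ) (x : Fin (n + 1) → A) (α : Fin (n + 1) → EReal)
    (_ : (∃ i, α i = ⊤) ∧ mmOf x α = μ), fiberSup x α p

/-- The coefficient of an idempotent measure at `p`, defined like `mmCoeff`. -/
def idemCoeff (μ : (A → ℝ) → ℝ) (p : A) : EReal :=
  ⨆ (n : ℕ) (x : Fin (n + 1) → A) (α : Fin (n + 1) → EReal)
    (_ : (∀ i, α i ≤ 0) ∧ (∃ i, α i = 0) ∧ idemOf x α = μ), fiberSup x α p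

lemma mmCoeff_mmOf {x : Fin (n + 1) → A} {α : Fin (n + 1) → EReal} (hα : ∃ i, α i = ⊤)
    (p : A) : mmCoeff (mmOf x α) p = fiberSup x α p :=
  le_antisymm
    (iSup_le fun _ => iSup_le fun _ => iSup_le fun _ => iSup_le fun ⟨hβ, h⟩ =>
      (fiberSup_eq_of_mmOf_eq hβ hα h p).le)
    (le_iSup_of_le n <| le_iSup_of_le x <| le_iSup_of_le α <| le_iSup_of_le ⟨hα, rfl⟩ le_rfl)

lemma idemCoeff_idemOf {x : Fin (n + 1) → A} {α : Fin (n + 1) → EReal} (hle : ∀ i, α i ≤ 0)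
    (h0 : ∃ i, α i = 0) (p : A) : idemCoeff (idemOf x α) p = fiberSup x α p :=
  le_antisymm
    (iSup_le fun _ => iSup_le fun _ => iSup_le fun _ => iSup_le fun ⟨hβle, hβ0, h⟩ =>
      (fiberSup_eq_of_idemOf_eq hβle hβ0 hle h0 h p).le)
    (le_iSup_of_le n <| le_iSup_of_le x <| le_iSup_of_le α <|
      le_iSup_of_le ⟨hle, h0, rfl⟩ le_rfl)

lemma isMM_mmOf {x : Fin (n + 1) → A} {α : Fin (n + 1) → EReal} (hα : ∃ i, α i = ⊤) :
    IsMM (mmOf x α) :=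
  ⟨n, x, α, fun _ => trivial, hα, rfl⟩

lemma isIdem_idemOf {x : Fin (n + 1) → A} {α : Fin (n + 1) → EReal} (hle : ∀ i, α i ≤ 0)
    (h0 : ∃ i, α i = 0) : IsIdem (idemOf x α) :=
  ⟨n, x, α, fun _ => trivial, hle, h0, rfl⟩

lemma jmap_mmOf (f : A → B) (x : Fin (n + 1) → A) (α : Fin (n + 1) → EReal) :
    Jmap f (mmOf x α) = mmOf (f ∘ x) α :=
  rfl

lemma jmap_idemOf (f : A → B) (x : Fin (n + 1) → A) (α : Fin (n + 1) → EReal) :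
    Jmap f (idemOf x α) = idemOf (f ∘ x) α :=
  rfl

end Coefficients

namespace IsMM

variable {A B : Type*} {μ ν : (A → ℝ) → ℝ}

lemma exists_mmCoeff_eq_top (hμ : IsMM μ) : ∃ p, mmCoeff μ p = ⊤ := by
  obtain ⟨n, x, α, -, ⟨i, hi⟩, rfl⟩ := hμ
  exact ⟨x i, (mmCoeff_mmOf ⟨i, hi⟩ _).trans (top_unique (hi ▸ le_fiberSup x α i))⟩

lemma apply_eq_iSup_mmCoeff (hμ : IsMM μ) (φ : A → ℝ) :
    μ φ = (⨆ p, min (mmCoeff μ p) (φ p : EReal)).toReal := by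
  obtain ⟨n, x, α, -, hα, rfl⟩ := hμ
  simp only [mmCoeff_mmOf hα, mmOf_apply_eq_iSup_fiberSup]

lemma ext (hμ : IsMM μ) (hν : IsMM ν) (h : ∀ p, mmCoeff μ p = mmCoeff ν p) : μ = ν := by
  funext φ
  simp only [hμ.apply_eq_iSup_mmCoeff, hν.apply_eq_iSup_mmCoeff, h]

lemma jmap (hμ : IsMM μ) (f : A → B) : IsMM (Jmap f μ) := by
  obtain ⟨n, x, α, -, hα, rfl⟩ := hμ
  exact isMM_mmOf hα

lemma mmCoeff_jmap (hμ : IsMM μ) (f : A → B) (q : B) :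
    mmCoeff (Jmap f μ) q = ⨆ p ∈ f ⁻¹' {q}, mmCoeff μ p := by
  obtain ⟨n, x, α, -, hα, rfl⟩ := hμ
  simp only [jmap_mmOf, mmCoeff_mmOf hα, fiberSup_comp]

end IsMM

namespace IsIdem

variable {A B : Type*} {μ ν : (A → ℝ) → ℝ}

lemma idemCoeff_le (hμ : IsIdem μ) (p : A) : idemCoeff μ p ≤ 0 := by
  obtain ⟨n, x, α, -, hle, h0, rfl⟩ := hμ
  exact (idemCoeff_idemOf hle h0 p).trans_le (fiberSup_le hle p)

lemma exists_idemCoeff_eq_zero (hμ : IsIdem μ) : ∃ p, idemCoeff μ p = 0 := by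
  obtain ⟨n, x, α, -, hle, ⟨i, hi⟩, rfl⟩ := hμ
  refine ⟨x i, (idemCoeff_idemOf hle ⟨i, hi⟩ _).trans (le_antisymm (fiberSup_le hle _) ?_)⟩
  exact hi ▸ le_fiberSup x α i

lemma apply_eq_iSup_idemCoeff (hμ : IsIdem μ) (φ : A → ℝ) :
    μ φ = (⨆ p, (idemCoeff μ p + φ p : EReal)).toReal := by
  obtain ⟨n, x, α, -, hle, h0, rfl⟩ := hμ
  simp only [idemCoeff_idemOf hle h0, idemOf_apply_eq_iSup_fiberSup]

lemma ext (hμ : IsIdem μ) (hν : IsIdem ν) (h : ∀ p, idemCoeff μ p = idemCoeff ν p) :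
    μ = ν := by
  funext φ
  simp only [hμ.apply_eq_iSup_idemCoeff, hν.apply_eq_iSup_idemCoeff, h]

lemma jmap (hμ : IsIdem μ) (f : A → B) : IsIdem (Jmap f μ) := by
  obtain ⟨n, x, α, -, hle, h0, rfl⟩ := hμ
  exact isIdem_idemOf hle h0

lemma idemCoeff_jmap (hμ : IsIdem μ) (f : A → B) (q : B) :
    idemCoeff (Jmap f μ) q = ⨆ p ∈ f ⁻¹' {q}, idemCoeff μ p := by
  obtain ⟨n, x, α, -, hle, h0, rfl⟩ := hμ
  simp only [jmap_idemOf, idemCoeff_idemOf hle h0, fiberSup_comp]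

end IsIdem

def Disc (α : Type) (_ : ℝ) : Type := α

namespace Disc

variable {α : Type} {R : ℝ}

def of : α ≃ Disc α R := Equiv.refl α

open Classical in
/-- The discrete metric of scale `max R 1`; the `max` keeps distinct points apart for every `R`. -/
instance : MetricSpace (Disc α R) where
  dist a b := if a = b then 0 else max R 1
  dist_self a := if_pos rfl
  dist_comm a b := by simp only [eq_comm]
  dist_triangle a b c := by
    have hD : (0 : ℝ) ≤ max R 1 := zero_le_one.trans (le_max_right R 1)
    split_ifs <;> simp_all
  eq_of_dist_eq_zero {a b} h := by
    by_contra hab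
    simp only [if_neg hab] at h
    linarith [le_max_right R 1]

lemma dist_le (a b : Disc α R) : dist a b ≤ max R 1 := by
  classical
  change (if a = b then 0 else max R 1) ≤ max R 1
  split_ifs
  exacts [zero_le_one.trans (le_max_right R 1), le_rfl]

lemma dist_of_ne {a b : Disc α R} (h : a ≠ b) : dist a b = max R 1 := by
  classical
  exact if_neg h

lemma isUltra : IsUltra (Disc α R) := by
  intro a b c
  by_cases hab : a = b
  · rw [hab, dist_self]
    exact le_max_of_le_left dist_nonneg
  by_cases hac : a = c
  · subst hac
    exact (dist_le a b).trans_eq (dist_of_ne hab).symm |>.trans (le_max_right _ _)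
  · exact (dist_le a b).trans_eq (dist_of_ne hac).symm |>.trans (le_max_left _ _)

lemma nonexpanding {Y : Type} [MetricSpace Y] {f : Disc α R → Y}
    (hf : ∀ a b, dist (f a) (f b) ≤ max R 1) (a b : Disc α R) :
    dist (f a) (f b) ≤ dist a b := by
  by_cases hab : a = b
  · rw [hab, dist_self, dist_self]
  · exact (hf a b).trans_eq (dist_of_ne hab).symm

open Classical in
def collapse (S : Set (Disc α R)) : Disc α R → Disc (Fin 2) 1 :=
  fun w => if w ∈ S then of 1 else of 0

lemma collapse_nonexpanding (S : Set (Disc α R)) (a b : Disc α R) :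
    dist (collapse S a) (collapse S b) ≤ dist a b :=
  nonexpanding (fun a b => (dist_le _ _).trans (by simp)) a b

lemma preimage_collapse_one (S : Set (Disc α R)) : collapse S ⁻¹' {of 1} = S := by
  ext w
  by_cases hw : w ∈ S <;> simp [collapse, hw]

lemma preimage_collapse_zero (S : Set (Disc α R)) : collapse S ⁻¹' {of 0} = Sᶜ := by
  ext w
  by_cases hw : w ∈ S <;> simp [collapse, hw]

end Disc

abbrev TwoPt : Type := Disc (Fin 2) 1

def twoPointIdem (t : EReal) : (TwoPt → ℝ) → ℝ :=
  idemOf Disc.of ![0, t]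

lemma isIdem_twoPointIdem {t : EReal} (ht : t ≤ 0) : IsIdem (twoPointIdem t) :=
  isIdem_idemOf (fun i => by fin_cases i <;> simp [ht]) ⟨0, rfl⟩

lemma idemCoeff_twoPointIdem {t : EReal} (ht : t ≤ 0) (i : Fin 2) :
    idemCoeff (twoPointIdem t) (Disc.of i) = ![0, t] i := by
  rw [twoPointIdem, idemCoeff_idemOf (fun i => by fin_cases i <;> simp [ht]) ⟨0, rfl⟩,
    fiberSup_apply_of_injective Disc.of.injective]

lemma IsIdem.eq_twoPointIdem {ν : (TwoPt → ℝ) → ℝ} (hν : IsIdem ν)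
    (h0 : idemCoeff ν (Disc.of 0) = 0) : ν = twoPointIdem (idemCoeff ν (Disc.of 1)) := by
  refine hν.ext (isIdem_twoPointIdem (hν.idemCoeff_le _)) fun w => ?_
  obtain ⟨i, rfl⟩ := Disc.of.surjective w
  rw [idemCoeff_twoPointIdem (hν.idemCoeff_le _)]
  fin_cases i
  exacts [h0, rfl]

structure IsNaturalBijection (k : ∀ (X : Type) [MetricSpace X], ((X → ℝ) → ℝ) → ((X → ℝ) → ℝ)) :
    Prop where
  bijOn : ∀ (X : Type) [MetricSpace X], IsUltra X →
    Set.BijOn (k X) {μ | IsIdem μ} {μ | IsMM μ}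
  naturality : ∀ (X Y : Type) [MetricSpace X] [MetricSpace Y], IsUltra X → IsUltra Y →
    ∀ f : X → Y, (∀ p q : X, dist (f p) (f q) ≤ dist p q) →
    ∀ μ, IsIdem μ → Jmap f (k X μ) = k Y (Jmap f μ)

/-- The map `α` of the theorem: `k (0 ⊙ δ₀ ∨ t ⊙ δ₁) = ⊤ ∧ δ₀ ∨ galpha k t ∧ δ₁`. -/
def galpha (k : ∀ (X : Type) [MetricSpace X], ((X → ℝ) → ℝ) → ((X → ℝ) → ℝ)) (t : EReal) :
    EReal :=
  mmCoeff (k TwoPt (twoPointIdem t)) (Disc.of 1)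

namespace IsNaturalBijection

variable {k : ∀ (X : Type) [MetricSpace X], ((X → ℝ) → ℝ) → ((X → ℝ) → ℝ)} {ι : Type} {R : ℝ}

lemma isMM (hk : IsNaturalBijection k) {X : Type} [MetricSpace X] (hX : IsUltra X)
    {μ : (X → ℝ) → ℝ} (hμ : IsIdem μ) : IsMM (k X μ) :=
  (hk.bijOn X hX).mapsTo hμ

lemma jmap_collapse (hk : IsNaturalBijection k) {μ : (Disc ι R → ℝ) → ℝ} (hμ : IsIdem μ)
    (S : Set (Disc ι R)) :
    Jmap (Disc.collapse S) (k _ μ) = k TwoPt (Jmap (Disc.collapse S) μ) :=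
  hk.naturality _ _ Disc.isUltra Disc.isUltra _ (Disc.collapse_nonexpanding S) μ hμ

/-- Collapsing a set `S` that misses a point of weight `0` turns `μ` into
`twoPointIdem (⨆ w ∈ S, idemCoeff μ w)`; naturality then computes the weights of `k μ` on `S`
and on its complement. -/
lemma iSup_mmCoeff_collapse (hk : IsNaturalBijection k) {μ : (Disc ι R → ℝ) → ℝ}
    (hμ : IsIdem μ) {S : Set (Disc ι R)} (hS : ∃ w ∉ S, idemCoeff μ w = 0) :
    (⨆ w ∈ S, mmCoeff (k _ μ) w) = galpha k (⨆ w ∈ S, idemCoeff μ w) ∧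
      (⨆ w ∈ Sᶜ, mmCoeff (k _ μ) w) =
        mmCoeff (k TwoPt (twoPointIdem (⨆ w ∈ S, idemCoeff μ w))) (Disc.of 0) := by
  obtain ⟨w₀, hw₀S, hw₀⟩ := hS
  have hcoeff0 : idemCoeff (Jmap (Disc.collapse S) μ) (Disc.of 0) = 0 := by
    rw [hμ.idemCoeff_jmap, Disc.preimage_collapse_zero]
    exact le_antisymm (iSup₂_le fun w _ => hμ.idemCoeff_le w)
      (hw₀ ▸ le_iSup₂ (f := fun w (_ : w ∈ Sᶜ) => idemCoeff μ w) w₀ hw₀S)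
  have hcollapse : Jmap (Disc.collapse S) μ = twoPointIdem (⨆ w ∈ S, idemCoeff μ w) := by
    rw [(hμ.jmap _).eq_twoPointIdem hcoeff0, hμ.idemCoeff_jmap, Disc.preimage_collapse_one]
  have hnat := hk.jmap_collapse hμ S
  have hkμ := hk.isMM Disc.isUltra hμ
  rw [galpha, ← hcollapse, ← hnat, hkμ.mmCoeff_jmap, hkμ.mmCoeff_jmap,
    Disc.preimage_collapse_one, Disc.preimage_collapse_zero]
  exact ⟨rfl, rfl⟩

/-- Collapsing two of the three points of `0 ⊙ δ₀ ∨ s ⊙ δ₁ ∨ t ⊙ δ₂` in the three possible ways. -/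
lemma galpha_sup_and_mmCoeff_zero (hk : IsNaturalBijection k) {s t : EReal} (hs : s ≤ 0)
    (ht : t ≤ 0) :
    galpha k (s ⊔ t) = galpha k s ⊔ galpha k t ∧
      mmCoeff (k TwoPt (twoPointIdem t)) (Disc.of 0) =
        mmCoeff (k TwoPt (twoPointIdem (s ⊔ t))) (Disc.of 0) ⊔ galpha k s := by
  let of : Fin 3 → Disc (Fin 3) 1 := Disc.of
  have hle : ∀ i, ![0, s, t] i ≤ 0 := fun i => by fin_cases i <;> simp [hs, ht]
  have hμ : IsIdem (idemOf of ![0, s, t]) := isIdem_idemOf hle ⟨0, rfl⟩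
  have hcoeff (i : Fin 3) : idemCoeff (idemOf of ![0, s, t]) (of i) = ![0, s, t] i := by
    rw [idemCoeff_idemOf hle ⟨0, rfl⟩, fiberSup_apply_of_injective Disc.of.injective]
  have hS {S : Set (Disc (Fin 3) 1)} (h : of 0 ∉ S) :
      ∃ w ∉ S, idemCoeff (idemOf of ![0, s, t]) w = 0 :=
    ⟨of 0, h, hcoeff 0⟩
  have hcompl2 : ({of 2}ᶜ : Set (Disc (Fin 3) 1)) = {of 0, of 1} := by
    ext w
    obtain ⟨i, rfl⟩ := Disc.of.surjective w
    fin_cases i <;> simp [of]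
  have hcompl12 : ({of 1, of 2}ᶜ : Set (Disc (Fin 3) 1)) = {of 0} := by
    ext w
    obtain ⟨i, rfl⟩ := Disc.of.surjective w
    fin_cases i <;> simp [of]
  obtain ⟨h2, h01⟩ := hk.iSup_mmCoeff_collapse hμ (hS (S := {of 2}) (by simp [of]))
  obtain ⟨h12, h0⟩ := hk.iSup_mmCoeff_collapse hμ (hS (S := {of 1, of 2}) (by simp [of]))
  obtain ⟨h1, -⟩ := hk.iSup_mmCoeff_collapse hμ (hS (S := {of 1}) (by simp [of]))
  simp only [hcompl2, hcompl12, iSup_singleton, iSup_pair, hcoeff, Matrix.cons_val]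
    at h2 h01 h12 h0 h1
  constructor
  · rw [← h12, ← h1, ← h2]
  · rw [← h01, ← h0, ← h1]

lemma monotoneOn_galpha (hk : IsNaturalBijection k) : MonotoneOn (galpha k) {t | t ≤ 0} :=
  fun s hs t ht hst => by
    have h := (hk.galpha_sup_and_mmCoeff_zero hs ht).1
    rw [sup_of_le_right hst] at h
    exact le_sup_left.trans_eq h.symm

lemma mmCoeff_zero_eq_top (hk : IsNaturalBijection k) {t : EReal} (ht : t ≤ 0) :
    mmCoeff (k TwoPt (twoPointIdem t)) (Disc.of 0) = ⊤ := by
  rw [(hk.galpha_sup_and_mmCoeff_zero le_rfl ht).2, sup_of_le_left ht, galpha]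
  obtain ⟨w, hw⟩ := (hk.isMM Disc.isUltra (isIdem_twoPointIdem le_rfl)).exists_mmCoeff_eq_top
  obtain ⟨i, rfl⟩ := Disc.of.surjective w
  fin_cases i
  · exact top_unique (hw ▸ le_sup_left)
  · exact top_unique (hw ▸ le_sup_right)

lemma compl_singleton_zero : ({Disc.of 0}ᶜ : Set TwoPt) = {Disc.of 1} := by
  ext w
  obtain ⟨i, rfl⟩ := Disc.of.surjective w
  fin_cases i <;> simp

lemma galpha_zero (hk : IsNaturalBijection k) : galpha k 0 = ⊤ := by
  have h := (hk.iSup_mmCoeff_collapse (isIdem_twoPointIdem le_rfl) (S := {Disc.of 0})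
    ⟨Disc.of 1, by simp, idemCoeff_twoPointIdem le_rfl 1⟩).2
  rw [compl_singleton_zero, iSup_singleton, iSup_singleton, idemCoeff_twoPointIdem le_rfl] at h
  simpa [galpha, hk.mmCoeff_zero_eq_top le_rfl] using h

lemma mmCoeff_one_eq_galpha (hk : IsNaturalBijection k) {ν : (TwoPt → ℝ) → ℝ} (hν : IsIdem ν) :
    mmCoeff (k TwoPt ν) (Disc.of 1) = galpha k (idemCoeff ν (Disc.of 1)) := by
  obtain ⟨w, hw⟩ := hν.exists_idemCoeff_eq_zero
  obtain ⟨i, rfl⟩ := Disc.of.surjective w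
  fin_cases i
  · simpa using (hk.iSup_mmCoeff_collapse hν (S := {Disc.of 1}) ⟨Disc.of 0, by simp, hw⟩).1
  · have h := (hk.iSup_mmCoeff_collapse hν (S := {Disc.of 0}) ⟨Disc.of 1, by simp, hw⟩).2
    rw [compl_singleton_zero, iSup_singleton, iSup_singleton,
      hk.mmCoeff_zero_eq_top (hν.idemCoeff_le _)] at h
    rw [h, show idemCoeff ν (Disc.of 1) = 0 from hw, hk.galpha_zero]

lemma mmCoeff_eq_galpha (hk : IsNaturalBijection k) {μ : (Disc ι R → ℝ) → ℝ} (hμ : IsIdem μ)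
    (p : Disc ι R) : mmCoeff (k _ μ) p = galpha k (idemCoeff μ p) :=
  calc mmCoeff (k _ μ) p = mmCoeff (Jmap (Disc.collapse {p}) (k _ μ)) (Disc.of 1) := by
        rw [(hk.isMM Disc.isUltra hμ).mmCoeff_jmap, Disc.preimage_collapse_one, iSup_singleton]
    _ = galpha k (idemCoeff (Jmap (Disc.collapse {p}) μ) (Disc.of 1)) := by
        rw [hk.jmap_collapse hμ, hk.mmCoeff_one_eq_galpha (hμ.jmap _)]
    _ = galpha k (idemCoeff μ p) := by
        rw [hμ.idemCoeff_jmap, Disc.preimage_collapse_one, iSup_singleton]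

lemma injOn_galpha (hk : IsNaturalBijection k) : Set.InjOn (galpha k) {t | t ≤ 0} :=
  fun s hs t ht hst => by
    have hks : k TwoPt (twoPointIdem s) = k TwoPt (twoPointIdem t) := by
      refine (hk.isMM Disc.isUltra (isIdem_twoPointIdem hs)).ext
        (hk.isMM Disc.isUltra (isIdem_twoPointIdem ht)) fun w => ?_
      obtain ⟨i, rfl⟩ := Disc.of.surjective w
      fin_cases i
      · exact (hk.mmCoeff_zero_eq_top hs).trans (hk.mmCoeff_zero_eq_top ht).symm
      · exact hst
    have h := congrArg (idemCoeff · (Disc.of 1)) <|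
      (hk.bijOn TwoPt Disc.isUltra).injOn (isIdem_twoPointIdem hs) (isIdem_twoPointIdem ht) hks
    simpa [idemCoeff_twoPointIdem hs, idemCoeff_twoPointIdem ht] using h

lemma surjOn_galpha (hk : IsNaturalBijection k) : Set.SurjOn (galpha k) {t | t ≤ 0} Set.univ :=
  fun w _ => by
    obtain ⟨ν, hν, hkν⟩ := (hk.bijOn TwoPt Disc.isUltra).surjOn
      (isMM_mmOf (x := (Disc.of : Fin 2 → TwoPt)) (α := ![⊤, w]) ⟨0, rfl⟩)
    refine ⟨idemCoeff ν (Disc.of 1), hν.idemCoeff_le _, ?_⟩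
    rw [← hk.mmCoeff_one_eq_galpha hν, hkν, mmCoeff_mmOf ⟨0, rfl⟩,
      fiberSup_apply_of_injective Disc.of.injective]
    rfl

lemma apply_idemOf_of (hk : IsNaturalBijection k) {n : ℕ} {α : Fin (n + 1) → EReal}
    (hle : ∀ i, α i ≤ 0) (h0 : ∃ i, α i = 0) :
    k (Disc (Fin (n + 1)) R) (idemOf Disc.of α) = mmOf Disc.of (fun i => galpha k (α i)) := by
  have hμ := isIdem_idemOf (x := (Disc.of : Fin (n + 1) → Disc (Fin (n + 1)) R)) hle h0
  obtain ⟨i₀, hi₀⟩ := h0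
  have htop : ∃ i, galpha k (α i) = ⊤ := ⟨i₀, by rw [hi₀, hk.galpha_zero]⟩
  refine (hk.isMM Disc.isUltra hμ).ext (isMM_mmOf htop) fun w => ?_
  obtain ⟨i, rfl⟩ := Disc.of.surjective w
  rw [hk.mmCoeff_eq_galpha hμ, idemCoeff_idemOf hle ⟨i₀, hi₀⟩, mmCoeff_mmOf htop,
    fiberSup_apply_of_injective Disc.of.injective, fiberSup_apply_of_injective Disc.of.injective]

/-- Any finitely supported measure on `X` is the image of one on a discrete space whose scale
exceeds the diameter of its support. -/
lemma apply_idemOf (hk : IsNaturalBijection k) {X : Type} [MetricSpace X] (hX : IsUltra X)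
    {n : ℕ} (x : Fin (n + 1) → X) {α : Fin (n + 1) → EReal} (hle : ∀ i, α i ≤ 0)
    (h0 : ∃ i, α i = 0) : k X (idemOf x α) = mmOf x (fun i => galpha k (α i)) := by
  let d : Fin (n + 1) × Fin (n + 1) → ℝ := fun ij => dist (x ij.1) (x ij.2)
  let f : Disc (Fin (n + 1)) (⨆ ij, d ij) → X := x ∘ Disc.of.symm
  have hf : ∀ a b, dist (f a) (f b) ≤ dist a b := Disc.nonexpanding fun a b =>
    (le_ciSup (Set.finite_range d).bddAbove (Disc.of.symm a, Disc.of.symm b)).trans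
      (le_max_left _ _)
  have h := hk.naturality _ X Disc.isUltra hX f hf _ (isIdem_idemOf (x := Disc.of) hle h0)
  rw [hk.apply_idemOf_of hle h0, jmap_mmOf, jmap_idemOf] at h
  exact h.symm

end IsNaturalBijection

theorem functor_iso_is_galpha_general
    (k : ∀ (X : Type) [MetricSpace X], ((X → ℝ) → ℝ) → ((X → ℝ) → ℝ))
    (hbij : ∀ (X : Type) [MetricSpace X], IsUltra X →
      Set.BijOn (k X) {μ | IsIdem μ} {μ | IsMM μ})
    (hnat : ∀ (X Y : Type) [MetricSpace X] [MetricSpace Y],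
      IsUltra X → IsUltra Y →
      ∀ f : X → Y, (∀ p q : X, dist (f p) (f q) ≤ dist p q) →
      ∀ μ, IsIdem μ → Jmap f (k X μ) = k Y (Jmap f μ)) :
    ∃ a : EReal → EReal,
      MonotoneOn a {t : EReal | t ≤ 0} ∧
      Set.BijOn a {t : EReal | t ≤ 0} Set.univ ∧
      ∀ (X : Type) [MetricSpace X], IsUltra X →
        ∀ (n : ℕ) (x : Fin (n + 1) → X) (α : Fin (n + 1) → EReal),
          (∀ i, α i ≤ 0) → (∃ i, α i = 0) →
          k X (idemOf x α) = mmOf x (fun i => a (α i)) := by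
  have hk : IsNaturalBijection k := ⟨hbij, hnat⟩
  exact ⟨galpha k, hk.monotoneOn_galpha,
    ⟨fun _ _ => Set.mem_univ _, hk.injOn_galpha, hk.surjOn_galpha⟩,
    fun _ _ hX _ x _ hle h0 => hk.apply_idemOf hX x hle h0⟩

/-- Every isomorphism `k` of the functors `I_ω` and `J_ω`
(a family of bijective isometries `k_X : I_ω(X) → J_ω(X)` which is natural
with respect to nonexpanding maps of ultrametric spaces) is of the form `g^a`
for some order-preserving bijection `a : [-∞,0] → [-∞,+∞]`. -/
theorem functor_iso_is_galpha
    (k : ∀ (X : Type) [MetricSpace X], ((X → ℝ) → ℝ) → ((X → ℝ) → ℝ))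
    (hbij : ∀ (X : Type) [MetricSpace X], IsUltra X →
      Set.BijOn (k X) {μ | IsIdem μ} {μ | IsMM μ})
    (hiso : ∀ (X : Type) [MetricSpace X], IsUltra X →
      ∀ μ ν, IsIdem μ → IsIdem ν →
        dHatE (eD X) (k X μ) (k X ν) = dHatE (eD X) μ ν)
    (hnat : ∀ (X Y : Type) [MetricSpace X] [MetricSpace Y],
      IsUltra X → IsUltra Y →
      ∀ f : X → Y, (∀ p q : X, dist (f p) (f q) ≤ dist p q) →
      ∀ μ, IsIdem μ → Jmap f (k X μ) = k Y (Jmap f μ)) :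
    ∃ a : EReal → EReal,
      MonotoneOn a {t : EReal | t ≤ 0} ∧
      Set.BijOn a {t : EReal | t ≤ 0} Set.univ ∧
      ∀ (X : Type) [MetricSpace X], IsUltra X →
        ∀ (n : ℕ) (x : Fin (n + 1) → X) (α : Fin (n + 1) → EReal),
          (∀ i, α i ≤ 0) → (∃ i, α i = 0) →
          k X (idemOf x α) = mmOf x (fun i => a (α i)) :=
  functor_iso_is_galpha_general k hbij hnat

end
end
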